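/- Fix N ≥ 1, k > 0 and h > 0, with vectors indexed cyclically by j ∈ ℤ/Nℤ. Let G : ℝ^N → ℝ^N be differentiable with each component G_j convex, each partial derivative ∂G_i/∂u_j locally Lipschitz, satisfying the numerical Poincaré inequality: there exists ϱ > 0 such that for all U, V ∈ ℝ^N, Σ_j ((u_j − u_{j+1})/h − (v_j − v_{j+1})/h)² ≤ ϱ Σ_j (G_j(U) − G_j(V) − ⟨∇G_j(V), U − V⟩), and satisfying translation invariance: G_j(U + s·𝟙) = G_j(U) for all U ∈ ℝ^N, s ∈ ℝ and j, where 𝟙 = (1,…,1). Let (M*, U*) ∈ ℝ^N × ℝ^N satisfy F̃(M*, U*) = 0 with all m*_j > 0 and (1/N)Σ_j m*_j = 1. Let (M, U) : [0, ∞) → ℝ^N × ℝ^N be a differentiable solution of the discrete Hessian Riemannian flow with all m_j(t) > 0, (1/N)Σ_j m_j(0) = 1, and Σ_j u_j(0) = Σ_j u*_j. Then for each j, u_j(t) → u*_j and m_j(t) → m*_j as t → ∞. -/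

import Mathlib

/-!
The function `D(M,U) = ∑ᵢ (m*ᵢ log (m*ᵢ / mᵢ) - m*ᵢ + mᵢ) + ½ ∑ⱼ (uⱼ - u*ⱼ)²` is a Lyapunov
function. Writing `Bᵢ(V, X) = Gᵢ(X) - Gᵢ(V) - ⟨∇Gᵢ(V), X - V⟩ ≥ 0` for the Bregman divergences of
the convex `Gᵢ`, the equations `F̃(M*,U*) = 0` and conservation of the mass `∑ mᵢ` give along the flow
`Ḋ = -W - ∑ᵢ mᵢ Bᵢ(U, U*) ≤ -W`, where `W = (1/k) ∑ᵢ (mᵢ - m*ᵢ)(log mᵢ - log m*ᵢ) + ∑ᵢ m*ᵢ Bᵢ(U*, U)`.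
Translation invariance gives `DG(U) 𝟙 = 0`, so `∑ uⱼ` is conserved as well. A sublevel set of `D`
inside these constraints is a compact set of positive masses, and on it `W` vanishes only at
`(M*,U*)`: the entropy term forces `M = M*`, the Poincaré inequality forces `U - U*` to be constant,
and the mean constraint makes the constant zero. Hence `W` is bounded below on `{D ≥ ε}`, so `D → 0`,
and compactness once more turns `D → 0` into `(M,U) → (M*,U*)`.
-/

open Filter

/-- The discrete entropy-penalized effective Hamiltonian
`H̃(M,U) = (∑ᵢ (mᵢ Gᵢ(U) − (1/k) mᵢ ln mᵢ)) / (∑ᵢ mᵢ)`, cyclic indexing. -/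
noncomputable def Htilde {N : ℕ} [NeZero N] (k : ℝ)
    (G : (ZMod N → ℝ) → (ZMod N → ℝ)) (M U : ZMod N → ℝ) : ℝ :=
  (∑ i, (M i * G U i - (1 / k) * (M i * Real.log (M i)))) / ∑ i, M i

/-- First block of `F̃(M,U)`: `(−Gᵢ(U) + H̃(M,U) + (1/k) ln mᵢ)ᵢ`. -/
noncomputable def Ftilde1 {N : ℕ} [NeZero N] (k : ℝ)
    (G : (ZMod N → ℝ) → (ZMod N → ℝ)) (M U : ZMod N → ℝ) (i : ZMod N) : ℝ :=
  -(G U i) + Htilde k G M U + (1 / k) * Real.log (M i)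

/-- Second block of `F̃(M,U)` (and of `F̄(M,U)`): the vector `DG(U)ᵀ M`. -/
noncomputable def Ftilde2 {N : ℕ} [NeZero N]
    (G : (ZMod N → ℝ) → (ZMod N → ℝ)) (M U : ZMod N → ℝ) (j : ZMod N) : ℝ :=
  ∑ i, M i * (fderiv ℝ G U) (Pi.single j 1) i

/-- First block of `F̄(M,U)`: `(mᵢ(−Gᵢ(U) + H̃(M,U) + (1/k) ln mᵢ))ᵢ`. -/
noncomputable def Fbar1 {N : ℕ} [NeZero N] (k : ℝ)
    (G : (ZMod N → ℝ) → (ZMod N → ℝ)) (M U : ZMod N → ℝ) (i : ZMod N) : ℝ :=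
  M i * Ftilde1 k G M U i

open Set Topology Real

theorem ConvexOn.add_fderiv_sub_le {E : Type*} [NormedAddCommGroup E] [NormedSpace ℝ E]
    {s : Set E} {f : E → ℝ} {f' : E →L[ℝ] ℝ} {u v : E} (hf : ConvexOn ℝ s f)
    (hu : u ∈ s) (hv : v ∈ s) (hd : HasFDerivAt f f' v) : f v + f' (u - v) ≤ f u := by
  set ℓ : ℝ →ᵃ[ℝ] E := AffineMap.lineMap v u
  have hline : HasDerivAt (f ∘ ℓ) (f' (u - v)) 0 :=
    (by simpa [ℓ] using hd : HasFDerivAt f f' (ℓ 0)).comp_hasDerivAt 0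
      AffineMap.hasDerivAt_lineMap
  have := (hf.comp_affineMap ℓ).le_slope_of_hasDerivAt
    (by simpa [ℓ] using hv) (by simpa [ℓ] using hu) one_pos hline
  simp only [slope_def_field, Function.comp_apply, ℓ, AffineMap.lineMap_apply_zero,
    AffineMap.lineMap_apply_one, sub_zero, div_one] at this
  linarith

theorem antitoneOn_Ici_of_hasDerivAt_nonpos {f f' : ℝ → ℝ} {a : ℝ}
    (hf : ∀ t, a ≤ t → HasDerivAt f (f' t) t) (hf' : ∀ t, a ≤ t → f' t ≤ 0) :
    AntitoneOn f (Ici a) := by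
  refine antitoneOn_of_hasDerivWithinAt_nonpos (f' := f') (convex_Ici a)
    (fun t ht => (hf t ht).continuousAt.continuousWithinAt) (fun t ht => ?_) fun t ht => ?_
  all_goals rw [interior_Ici] at ht
  · exact (hf t (le_of_lt ht)).hasDerivWithinAt
  · exact hf' t (le_of_lt ht)

theorem sum_apply_eq_sum_apply_zero_of_hasDerivAt {ι : Type*} [Fintype ι] {X X' : ℝ → ι → ℝ}
    (hX : ∀ t, 0 ≤ t → ∀ i, HasDerivAt (fun s => X s i) (X' t i) t)
    (hX' : ∀ t, 0 ≤ t → ∑ i, X' t i = 0) {t : ℝ} (ht : 0 ≤ t) : ∑ i, X t i = ∑ i, X 0 i := by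
  have hsum : ∀ t, 0 ≤ t → HasDerivAt (fun s => ∑ i, X s i) 0 t := fun t ht =>
    (HasDerivAt.fun_sum fun i _ => hX t ht i).congr_deriv (hX' t ht)
  exact constant_of_has_deriv_right_zero
    (fun x hx => (hsum x hx.1).continuousAt.continuousWithinAt)
    (fun x hx => (hsum x hx.1).hasDerivWithinAt) t ⟨ht, le_rfl⟩

theorem tendsto_zero_of_hasDerivAt_le_neg {f f' w : ℝ → ℝ}
    (hf : ∀ t, 0 ≤ t → HasDerivAt f (f' t) t) (hf' : ∀ t, 0 ≤ t → f' t ≤ -w t)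
    (hf_nonneg : ∀ t, 0 ≤ t → 0 ≤ f t) (hw : ∀ t, 0 ≤ t → 0 ≤ w t)
    (hgap : ∀ ε > 0, ∃ c > 0, ∀ t, 0 ≤ t → ε ≤ f t → f t ≤ f 0 → c ≤ w t) :
    Tendsto f atTop (𝓝 0) := by
  have hanti := antitoneOn_Ici_of_hasDerivAt_nonpos hf fun t ht => (hf' t ht).trans
    (neg_nonpos.2 (hw t ht))
  have hle : ∀ t, 0 ≤ t → f t ≤ f 0 := fun t ht => hanti (mem_Ici.2 le_rfl) ht ht
  refine tendsto_order.2 ⟨fun ε hε => ?_, fun ε hε => ?_⟩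
  · filter_upwards [eventually_ge_atTop 0] with t ht using hε.trans_le (hf_nonneg t ht)
  obtain ⟨T, hT, hfT⟩ : ∃ T, 0 ≤ T ∧ f T < ε := by
    by_contra! hge
    obtain ⟨c, hc, hcw⟩ := hgap ε hε
    -- decreasing at rate at least `c`, `f` would be negative at time `f 0 / c + 1`
    have hlin := antitoneOn_Ici_of_hasDerivAt_nonpos (f := fun t => f t + c * t)
      (fun t ht => (hf t ht).add ((hasDerivAt_id t).const_mul c))
      fun t ht => by linarith [hf' t ht, hcw t ht (hge t ht) (hle t ht)]
    have hT : 0 ≤ f 0 / c + 1 := by positivity [hf_nonneg 0 le_rfl]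
    have h1 := hlin (mem_Ici.2 le_rfl) hT hT
    have h2 := hf_nonneg _ hT
    simp only [mul_zero, add_zero, mul_add, mul_div_cancel₀ _ hc.ne', mul_one] at h1
    linarith
  filter_upwards [eventually_ge_atTop T] with t ht
  exact (hanti hT (hT.trans ht) ht).trans_lt hfT

theorem tendsto_of_tendsto_comp_of_isCompact {α X : Type*} [TopologicalSpace X] {l : Filter α}
    {f : α → X} {K : Set X} {φ : X → ℝ} {a : X} (hK : IsCompact K) (hφ : ContinuousOn φ K)
    (hpos : ∀ x ∈ K, x ≠ a → 0 < φ x) (hfK : ∀ᶠ t in l, f t ∈ K)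
    (hφf : Tendsto (φ ∘ f) l (𝓝 0)) : Tendsto f l (𝓝 a) := by
  refine (nhds_basis_opens a).tendsto_right_iff.2 fun V ⟨haV, hV⟩ => ?_
  obtain ⟨c, hc, hcφ⟩ := (hK.diff hV).exists_forall_le' (hφ.mono sdiff_subset)
    fun x hx => hpos x hx.1 fun hxa => hx.2 (hxa ▸ haV)
  filter_upwards [hfK, hφf.eventually (gt_mem_nhds hc)] with t htK htφ
  by_contra htV
  exact (hcφ _ ⟨htK, htV⟩).not_gt htφ

theorem ZMod.apply_eq_apply_zero_of_apply_add_one {N : ℕ} {α : Type*} {w : ZMod N → α}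
    (h : ∀ j, w (j + 1) = w j) (j : ZMod N) : w j = w 0 := by
  obtain ⟨n, rfl⟩ := ZMod.intCast_surjective j
  induction n using Int.induction_on with
  | zero => simp
  | succ n ih => rw [Int.cast_add, Int.cast_one, h, ih]
  | pred n ih => rw [← ih, ← h]; congr 1; push_cast; ring

/-- The generalized Kullback–Leibler divergence `a log (a / x) - a + x`. -/
noncomputable def klTerm (a x : ℝ) : ℝ := x - a - a * log x + a * log a

theorem klTerm_self (a : ℝ) : klTerm a a = 0 := by
  simp [klTerm]

theorem klTerm_pos {a x : ℝ} (ha : 0 < a) (hx : 0 < x) (hxa : x ≠ a) : 0 < klTerm a x := by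
  have h := log_lt_sub_one_of_pos (div_pos hx ha) (by rwa [Ne, div_eq_one_iff_eq ha.ne'])
  have hkl : klTerm a x = a * (x / a - 1 - log (x / a)) := by
    rw [klTerm, log_div hx.ne' ha.ne']
    field_simp
    ring
  rw [hkl]
  exact mul_pos ha (by linarith)

theorem klTerm_nonneg {a x : ℝ} (ha : 0 < a) (hx : 0 < x) : 0 ≤ klTerm a x := by
  rcases eq_or_ne x a with rfl | hxa
  · rw [klTerm_self]
  · exact (klTerm_pos ha hx hxa).le

theorem mul_exp_le_of_klTerm_le {a x C : ℝ} (ha : 0 < a) (hx : 0 < x) (h : klTerm a x ≤ C) :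
    a * exp (-((C + a) / a)) ≤ x := by
  have hlog : log a - (C + a) / a ≤ log x := by
    rw [sub_le_comm, le_div_iff₀ ha]
    unfold klTerm at h
    nlinarith
  calc a * exp (-((C + a) / a)) = exp (log a - (C + a) / a) := by
        rw [exp_sub, exp_log ha, exp_neg, ← div_eq_mul_inv]
    _ ≤ x := by rwa [← le_log_iff_exp_le hx]

theorem hasDerivAt_klTerm {a x : ℝ} (hx : x ≠ 0) : HasDerivAt (klTerm a) (1 - a / x) x := by
  have := (((hasDerivAt_id' x).sub_const a).fun_sub ((hasDerivAt_log hx).const_mul a)).add_const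
    (a * log a)
  rw [div_eq_mul_inv]
  exact this

theorem sub_mul_log_sub_log_pos {x y : ℝ} (hx : 0 < x) (hy : 0 < y) (hxy : x ≠ y) :
    0 < (x - y) * (log x - log y) := by
  rcases hxy.lt_or_gt with h | h
  · exact mul_pos_of_neg_of_neg (sub_neg.2 h) (sub_neg.2 (log_lt_log hx h))
  · exact mul_pos (sub_pos.2 h) (sub_pos.2 (log_lt_log hy h))

theorem sub_mul_log_sub_log_nonneg {x y : ℝ} (hx : 0 < x) (hy : 0 < y) :
    0 ≤ (x - y) * (log x - log y) := by
  rcases eq_or_ne x y with rfl | hxy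
  · simp
  · exact (sub_mul_log_sub_log_pos hx hy hxy).le

section Bregman

variable {ι : Type*} [Fintype ι] {G : (ι → ℝ) → ι → ℝ} {U V X : ι → ℝ}

noncomputable def bregman (G : (ι → ℝ) → ι → ℝ) (V X : ι → ℝ) (i : ι) : ℝ :=
  G X i - G V i - fderiv ℝ G V (X - V) i

theorem bregman_eq (hG : DifferentiableAt ℝ G V) (i : ι) :
    bregman G V X i = G X i - G V i - fderiv ℝ (fun W => G W i) V (X - V) := by
  rw [bregman, fderiv_apply hG]
  rfl

theorem bregman_nonneg (hG : DifferentiableAt ℝ G V) {i : ι}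
    (hconv : ConvexOn ℝ univ fun W => G W i) : 0 ≤ bregman G V X i := by
  have := hconv.add_fderiv_sub_le (mem_univ X) (mem_univ V) (hasFDerivAt_pi'.1 hG.hasFDerivAt i)
  rw [bregman]
  simp only [ContinuousLinearMap.coe_comp, Function.comp_apply,
    ContinuousLinearMap.proj_apply] at this
  linarith

theorem sum_mul_bregman_nonneg (hG : DifferentiableAt ℝ G V)
    (hGconv : ∀ i, ConvexOn ℝ univ fun W => G W i) {M : ι → ℝ} (hM : ∀ i, 0 ≤ M i) :
    0 ≤ ∑ i, M i * bregman G V X i :=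
  Finset.sum_nonneg fun i _ => mul_nonneg (hM i) (bregman_nonneg hG (hGconv i))

theorem fderiv_apply_one_eq_zero (hG : DifferentiableAt ℝ G U)
    (hGtrans : ∀ (U : ι → ℝ) (s : ℝ) (j : ι), G (U + fun _ => s) j = G U j) :
    fderiv ℝ G U 1 = 0 := by
  have hconst : (fun t : ℝ => G (U + t • (1 : ι → ℝ))) = fun _ => G U :=
    funext fun t => funext fun j => by
      rw [show t • (1 : ι → ℝ) = fun _ => t by ext; simp, hGtrans]
  rw [← hG.lineDeriv_eq_fderiv, lineDeriv, hconst, deriv_const]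

end Bregman

section Lyapunov

variable {ι : Type*} [Fintype ι] {Mstar Ustar M U : ι → ℝ}

noncomputable def lyapunov (Mstar Ustar M U : ι → ℝ) : ℝ :=
  ∑ i, klTerm (Mstar i) (M i) + 1 / 2 * ∑ j, (U j - Ustar j) ^ 2

noncomputable def dissipation (k : ℝ) (G : (ι → ℝ) → ι → ℝ) (Mstar Ustar M U : ι → ℝ) : ℝ :=
  1 / k * ∑ i, (M i - Mstar i) * (log (M i) - log (Mstar i)) + ∑ i, Mstar i * bregman G Ustar U i

theorem klTerm_le_lyapunov (hMstar : ∀ i, 0 < Mstar i) (hM : ∀ i, 0 < M i) (i : ι) :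
    klTerm (Mstar i) (M i) ≤ lyapunov Mstar Ustar M U := by
  have h1 := Finset.single_le_sum (fun i _ => klTerm_nonneg (hMstar i) (hM i)) (Finset.mem_univ i)
  have h2 : 0 ≤ ∑ j, (U j - Ustar j) ^ 2 := Finset.sum_nonneg fun _ _ => sq_nonneg _
  rw [lyapunov]
  linarith

theorem sq_le_two_mul_lyapunov (hMstar : ∀ i, 0 < Mstar i) (hM : ∀ i, 0 < M i) (j : ι) :
    (U j - Ustar j) ^ 2 ≤ 2 * lyapunov Mstar Ustar M U := by
  have h1 : 0 ≤ ∑ i, klTerm (Mstar i) (M i) :=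
    Finset.sum_nonneg fun i _ => klTerm_nonneg (hMstar i) (hM i)
  have h2 := Finset.single_le_sum (f := fun j => (U j - Ustar j) ^ 2)
    (fun _ _ => sq_nonneg _) (Finset.mem_univ j)
  rw [lyapunov]
  linarith

theorem lyapunov_nonneg (hMstar : ∀ i, 0 < Mstar i) (hM : ∀ i, 0 < M i) :
    0 ≤ lyapunov Mstar Ustar M U :=
  add_nonneg (Finset.sum_nonneg fun i _ => klTerm_nonneg (hMstar i) (hM i))
    (mul_nonneg (by norm_num) (Finset.sum_nonneg fun _ _ => sq_nonneg _))

theorem lyapunov_eq_zero_iff (hMstar : ∀ i, 0 < Mstar i) (hM : ∀ i, 0 < M i) :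
    lyapunov Mstar Ustar M U = 0 ↔ M = Mstar ∧ U = Ustar := by
  refine ⟨fun h => ⟨funext fun i => ?_, funext fun j => ?_⟩, ?_⟩
  · by_contra hne
    have := klTerm_le_lyapunov (Ustar := Ustar) (U := U) hMstar hM i
    linarith [klTerm_pos (hMstar i) (hM i) hne]
  · have := sq_le_two_mul_lyapunov (Ustar := Ustar) (U := U) hMstar hM j
    rw [h, mul_zero] at this
    exact sub_eq_zero.1 (pow_eq_zero_iff two_ne_zero |>.1 (le_antisymm this (sq_nonneg _)))
  · rintro ⟨rfl, rfl⟩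
    simp [lyapunov, klTerm_self]

theorem continuousOn_lyapunov :
    ContinuousOn (fun p : (ι → ℝ) × (ι → ℝ) => lyapunov Mstar Ustar p.1 p.2)
      {p | ∀ i, 0 < p.1 i} := by
  unfold lyapunov klTerm
  refine ContinuousOn.add ?_ (Continuous.continuousOn (by fun_prop))
  fun_prop (disch := exact fun p hp => (hp _).ne')

theorem continuousOn_dissipation {k : ℝ} {G : (ι → ℝ) → ι → ℝ} (hG : Continuous G) :
    ContinuousOn (fun p : (ι → ℝ) × (ι → ℝ) => dissipation k G Mstar Ustar p.1 p.2)
      {p | ∀ i, 0 < p.1 i} := by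
  unfold dissipation bregman
  fun_prop (disch := exact fun p hp => (hp _).ne')

theorem dissipation_nonneg {k : ℝ} {G : (ι → ℝ) → ι → ℝ} (hk : 0 < k)
    (hMstar : ∀ i, 0 < Mstar i) (hM : ∀ i, 0 < M i) (hG : DifferentiableAt ℝ G Ustar)
    (hGconv : ∀ i, ConvexOn ℝ univ fun W => G W i) :
    0 ≤ dissipation k G Mstar Ustar M U :=
  add_nonneg (mul_nonneg (by positivity)
      (Finset.sum_nonneg fun i _ => sub_mul_log_sub_log_nonneg (hM i) (hMstar i)))
    (sum_mul_bregman_nonneg hG hGconv fun i => (hMstar i).le)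

theorem exists_isCompact_lyapunov_sublevel (hMstar : ∀ i, 0 < Mstar i) (C : ℝ) :
    ∃ K : Set ((ι → ℝ) × (ι → ℝ)), IsCompact K ∧
      K ⊆ {p | (∀ i, 0 < p.1 i) ∧ ∑ j, p.2 j = ∑ j, Ustar j} ∧
      ∀ M U : ι → ℝ, (∀ i, 0 < M i) → ∑ i, M i = ∑ i, Mstar i → ∑ j, U j = ∑ j, Ustar j →
        lyapunov Mstar Ustar M U ≤ C → (M, U) ∈ K := by
  set δ : ι → ℝ := fun i => Mstar i * exp (-((C + Mstar i) / Mstar i))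
  set R := √(2 * C)
  refine ⟨(univ.pi fun i => Icc (δ i) (∑ i, Mstar i)) ×ˢ
      (univ.pi fun j => Icc (Ustar j - R) (Ustar j + R)) ∩ {p | ∑ j, p.2 j = ∑ j, Ustar j},
    ?_, ?_, ?_⟩
  · exact ((isCompact_univ_pi fun _ => isCompact_Icc).prod
      (isCompact_univ_pi fun _ => isCompact_Icc)).inter_right
      (isClosed_eq (by fun_prop) continuous_const)
  · rintro p ⟨⟨hp1, -⟩, hp2⟩
    have hδ : ∀ i, 0 < δ i := fun i => mul_pos (hMstar i) (exp_pos _)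
    exact ⟨fun i => (hδ i).trans_le (mem_univ_pi.1 hp1 i).1, hp2⟩
  · intro M U hM hmass hmean hC
    refine ⟨⟨fun i _ => ⟨?_, ?_⟩, fun j _ => ?_⟩, hmean⟩
    · exact mul_exp_le_of_klTerm_le (hMstar i) (hM i) ((klTerm_le_lyapunov hMstar hM i).trans hC)
    · exact hmass ▸ Finset.single_le_sum (fun i _ => (hM i).le) (Finset.mem_univ i)
    · have := abs_le.1 (abs_le_sqrt ((sq_le_two_mul_lyapunov hMstar hM j).trans
        (mul_le_mul_of_nonneg_left hC zero_le_two)))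
      constructor <;> linarith [this.1, this.2]

theorem tendsto_of_tendsto_lyapunov_zero {α : Type*} {l : Filter α} {M U : α → ι → ℝ}
    (hMstar : ∀ i, 0 < Mstar i)
    (hMU : ∀ᶠ t in l, (∀ i, 0 < M t i) ∧ ∑ i, M t i = ∑ i, Mstar i ∧ ∑ j, U t j = ∑ j, Ustar j)
    (hV : Tendsto (fun t => lyapunov Mstar Ustar (M t) (U t)) l (𝓝 0)) :
    Tendsto M l (𝓝 Mstar) ∧ Tendsto U l (𝓝 Ustar) := by
  obtain ⟨K, hK, hKsub, hKmem⟩ := exists_isCompact_lyapunov_sublevel (Ustar := Ustar) hMstar 1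
  have hMUK : ∀ᶠ t in l, (M t, U t) ∈ K := by
    filter_upwards [hMU, hV.eventually (ge_mem_nhds zero_lt_one)] with t ⟨hM, hmass, hmean⟩ hVt
    exact hKmem _ _ hM hmass hmean hVt
  have hconv : Tendsto (fun t => (M t, U t)) l (𝓝 (Mstar, Ustar)) :=
    tendsto_of_tendsto_comp_of_isCompact hK (continuousOn_lyapunov.mono fun p hp => (hKsub hp).1)
      (fun p hp hne => (lyapunov_nonneg hMstar (hKsub hp).1).lt_of_ne' fun h0 =>
        hne (Prod.ext_iff.2 ((lyapunov_eq_zero_iff hMstar (hKsub hp).1).1 h0)))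
      hMUK hV
  exact ⟨hconv.fst_nhds, hconv.snd_nhds⟩

theorem hasDerivAt_lyapunov {M U : ℝ → ι → ℝ} {M' U' : ι → ℝ} {t : ℝ}
    (hM : ∀ i, HasDerivAt (fun s => M s i) (M' i) t)
    (hU : ∀ j, HasDerivAt (fun s => U s j) (U' j) t) (hpos : ∀ i, M t i ≠ 0) :
    HasDerivAt (fun s => lyapunov Mstar Ustar (M s) (U s))
      (∑ i, (1 - Mstar i / M t i) * M' i + ∑ j, (U t j - Ustar j) * U' j) t := by
  have h1 := HasDerivAt.fun_sum (u := Finset.univ) fun i _ =>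
    (hasDerivAt_klTerm (a := Mstar i) (hpos i)).comp t (hM i)
  have h2 := HasDerivAt.fun_sum (u := Finset.univ) fun j _ =>
    ((hU j).sub_const (Ustar j)).pow 2
  refine (h1.add (h2.const_mul (1 / 2))).congr_deriv ?_
  rw [Finset.mul_sum]
  congr 1
  refine Finset.sum_congr rfl fun j _ => ?_
  push_cast
  ring

end Lyapunov

section Flow

variable {N : ℕ} [NeZero N] {k h ϱ : ℝ} {G : (ZMod N → ℝ) → ZMod N → ℝ}
  {Mstar Ustar M U : ZMod N → ℝ}

def IsDiscreteHRFlow (k : ℝ) (G : (ZMod N → ℝ) → ZMod N → ℝ) (M U : ℝ → ZMod N → ℝ) : Prop :=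
  ∀ t, 0 ≤ t → ∀ j,
    HasDerivAt (fun s => M s j) (-(Fbar1 k G (M t) (U t) j)) t ∧
    HasDerivAt (fun s => U s j) (-(Ftilde2 G (M t) (U t) j)) t

theorem sum_Fbar1_eq_zero (hM : ∑ i, M i ≠ 0) : ∑ i, Fbar1 k G M U i = 0 := by
  have hH : (∑ i, M i) * Htilde k G M U = ∑ i, (M i * G U i - 1 / k * (M i * log (M i))) :=
    mul_div_cancel₀ _ hM
  calc ∑ i, Fbar1 k G M U i
      = ∑ i, M i * Htilde k G M U - ∑ i, (M i * G U i - 1 / k * (M i * log (M i))) := by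
        rw [← Finset.sum_sub_distrib]
        exact Finset.sum_congr rfl fun i _ => by rw [Fbar1, Ftilde1]; ring
    _ = 0 := by rw [← Finset.sum_mul, hH, sub_self]

theorem sum_mul_Ftilde2 (w : ZMod N → ℝ) :
    ∑ j, w j * Ftilde2 G M U j = ∑ i, M i * fderiv ℝ G U w i := by
  simp_rw [Ftilde2, Finset.mul_sum]
  rw [Finset.sum_comm]
  refine Finset.sum_congr rfl fun i _ => ?_
  conv_rhs => rw [← Finset.univ_sum_single w, map_sum, Finset.sum_apply, Finset.mul_sum]
  refine Finset.sum_congr rfl fun j _ => ?_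
  have hsingle : Pi.single j (w j) = w j • Pi.single j (1 : ℝ) := by
    rw [← Pi.single_smul', smul_eq_mul, mul_one]
  rw [hsingle, map_smul, Pi.smul_apply, smul_eq_mul]
  ring

theorem sum_Ftilde2_eq_zero (hG : DifferentiableAt ℝ G U)
    (hGtrans : ∀ (U : ZMod N → ℝ) (s : ℝ) (j : ZMod N), G (U + fun _ => s) j = G U j) :
    ∑ j, Ftilde2 G M U j = 0 := by
  simpa [fderiv_apply_one_eq_zero hG hGtrans] using sum_mul_Ftilde2 (G := G) (M := M) (U := U) 1

theorem IsDiscreteHRFlow.sum_mass_eq {M U : ℝ → ZMod N → ℝ} (hflow : IsDiscreteHRFlow k G M U)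
    (hMpos : ∀ t, 0 ≤ t → ∀ i, 0 < M t i) {t : ℝ} (ht : 0 ≤ t) :
    ∑ i, M t i = ∑ i, M 0 i :=
  sum_apply_eq_sum_apply_zero_of_hasDerivAt (fun t ht i => (hflow t ht i).1) (fun t ht => by
    rw [Finset.sum_neg_distrib, sum_Fbar1_eq_zero
      (Finset.sum_pos (fun i _ => hMpos t ht i) Finset.univ_nonempty).ne', neg_zero]) ht

theorem IsDiscreteHRFlow.sum_mean_eq {M U : ℝ → ZMod N → ℝ} (hflow : IsDiscreteHRFlow k G M U)
    (hG : Differentiable ℝ G)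
    (hGtrans : ∀ (U : ZMod N → ℝ) (s : ℝ) (j : ZMod N), G (U + fun _ => s) j = G U j)
    {t : ℝ} (ht : 0 ≤ t) : ∑ j, U t j = ∑ j, U 0 j :=
  sum_apply_eq_sum_apply_zero_of_hasDerivAt (fun t ht j => (hflow t ht j).2) (fun t ht => by
    rw [Finset.sum_neg_distrib, sum_Ftilde2_eq_zero (hG _) hGtrans, neg_zero]) ht

theorem lyapunov_deriv_eq (hmass : ∑ i, M i = ∑ i, Mstar i)
    (hstar1 : ∀ i, Ftilde1 k G Mstar Ustar i = 0) (hstar2 : ∀ j, Ftilde2 G Mstar Ustar j = 0) :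
    -∑ i, (M i - Mstar i) * Ftilde1 k G M U i - ∑ j, (U j - Ustar j) * Ftilde2 G M U j
      = -dissipation k G Mstar Ustar M U - ∑ i, M i * bregman G U Ustar i := by
  have hF1 : ∀ i, (M i - Mstar i) * Ftilde1 k G M U i
      = (M i - Mstar i) * (Htilde k G M U - Htilde k G Mstar Ustar)
        - (M i - Mstar i) * (G U i - G Ustar i)
        + 1 / k * ((M i - Mstar i) * (log (M i) - log (Mstar i))) := fun i => by
    have := hstar1 i
    unfold Ftilde1 at this ⊢
    linear_combination (M i - Mstar i) * this
  have hH : ∑ i, (M i - Mstar i) * (Htilde k G M U - Htilde k G Mstar Ustar) = 0 := by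
    rw [← Finset.sum_mul, Finset.sum_sub_distrib, hmass, sub_self, zero_mul]
  have hF2 : ∑ j, (U j - Ustar j) * Ftilde2 G M U j = ∑ i, M i * fderiv ℝ G U (U - Ustar) i :=
    sum_mul_Ftilde2 (U - Ustar)
  have hF2star : ∑ i, Mstar i * fderiv ℝ G Ustar (U - Ustar) i = 0 := by
    rw [← sum_mul_Ftilde2]
    simp [hstar2]
  have hneg : ∀ i, fderiv ℝ G U (Ustar - U) i = -fderiv ℝ G U (U - Ustar) i := fun i => by
    rw [← neg_sub, map_neg, Pi.neg_apply]
  rw [Finset.sum_congr rfl fun i _ => hF1 i, hF2]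
  simp only [dissipation, bregman, hneg, Finset.sum_add_distrib, Finset.sum_sub_distrib,
    Finset.sum_neg_distrib, ← Finset.mul_sum, mul_sub, sub_mul, mul_neg] at hH ⊢
  linear_combination -hH - hF2star

theorem IsDiscreteHRFlow.hasDerivAt_lyapunov {M U : ℝ → ZMod N → ℝ}
    (hflow : IsDiscreteHRFlow k G M U) {t : ℝ} (ht : 0 ≤ t) (hpos : ∀ i, 0 < M t i)
    (hmass : ∑ i, M t i = ∑ i, Mstar i)
    (hstar1 : ∀ i, Ftilde1 k G Mstar Ustar i = 0) (hstar2 : ∀ j, Ftilde2 G Mstar Ustar j = 0) :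
    HasDerivAt (fun s => lyapunov Mstar Ustar (M s) (U s))
      (-dissipation k G Mstar Ustar (M t) (U t) - ∑ i, M t i * bregman G (U t) Ustar i) t := by
  rw [← lyapunov_deriv_eq hmass hstar1 hstar2]
  refine (_root_.hasDerivAt_lyapunov (fun i => (hflow t ht i).1) (fun j => (hflow t ht j).2)
    fun i => (hpos i).ne').congr_deriv ?_
  simp only [Fbar1, mul_neg, Finset.sum_neg_distrib, sub_eq_add_neg]
  congr 2
  refine Finset.sum_congr rfl fun i _ => ?_
  field_simp [(hpos i).ne']

theorem eq_of_sum_sq_diffQuot_sub_nonpos (hh : h ≠ 0) {U V : ZMod N → ℝ}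
    (hsq : ∑ j, ((U j - U (j + 1)) / h - (V j - V (j + 1)) / h) ^ 2 ≤ 0)
    (hsum : ∑ j, U j = ∑ j, V j) : U = V := by
  have hzero := (Finset.sum_eq_zero_iff_of_nonneg fun j _ => sq_nonneg _).1
    (le_antisymm hsq (Finset.sum_nonneg fun j _ => sq_nonneg _))
  have hstep : ∀ j, (U - V) (j + 1) = (U - V) j := fun j => by
    have := pow_eq_zero_iff two_ne_zero |>.1 (hzero j (Finset.mem_univ j))
    rw [← sub_div, div_eq_zero_iff, or_iff_left hh] at this
    simp only [Pi.sub_apply]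
    linarith
  have hconst := ZMod.apply_eq_apply_zero_of_apply_add_one hstep
  have hsum0 : (N : ℝ) * (U - V) 0 = 0 := by
    rw [← sub_eq_zero] at hsum
    rw [← hsum, ← Finset.sum_sub_distrib]
    simp_rw [← Pi.sub_apply, hconst]
    simp [mul_sub]
  rw [mul_eq_zero, or_iff_right (Nat.cast_ne_zero.2 (NeZero.ne N))] at hsum0
  exact funext fun j => sub_eq_zero.1 ((hconst j).trans hsum0)

theorem eq_of_dissipation_eq_zero (hk : 0 < k) (hh : h ≠ 0)
    (hpoin : ∑ j, ((U j - U (j + 1)) / h - (Ustar j - Ustar (j + 1)) / h) ^ 2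
      ≤ ϱ * ∑ j, bregman G Ustar U j)
    (hMstar : ∀ i, 0 < Mstar i) (hM : ∀ i, 0 < M i) (hG : DifferentiableAt ℝ G Ustar)
    (hGconv : ∀ i, ConvexOn ℝ univ fun W => G W i) (hmean : ∑ j, U j = ∑ j, Ustar j)
    (hW : dissipation k G Mstar Ustar M U = 0) : M = Mstar ∧ U = Ustar := by
  have hlog := fun i (_ : i ∈ Finset.univ) => sub_mul_log_sub_log_nonneg (hM i) (hMstar i)
  have hbreg := fun i (_ : i ∈ Finset.univ) =>
    mul_nonneg (hMstar i).le (bregman_nonneg (X := U) hG (hGconv i))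
  obtain ⟨hlog0, hbreg0⟩ := (add_eq_zero_iff_of_nonneg
    (mul_nonneg (by positivity) (Finset.sum_nonneg hlog)) (Finset.sum_nonneg hbreg)).1 hW
  rw [mul_eq_zero, or_iff_right (one_div_ne_zero hk.ne'),
    Finset.sum_eq_zero_iff_of_nonneg hlog] at hlog0
  rw [Finset.sum_eq_zero_iff_of_nonneg hbreg] at hbreg0
  refine ⟨funext fun i => by_contra fun hne => ?_, eq_of_sum_sq_diffQuot_sub_nonpos hh ?_ hmean⟩
  · exact (sub_mul_log_sub_log_pos (hM i) (hMstar i) hne).ne' (hlog0 i (Finset.mem_univ i))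
  · have : ∑ j, bregman G Ustar U j = 0 := Finset.sum_eq_zero fun j hj =>
      (mul_eq_zero.1 (hbreg0 j hj)).resolve_left (hMstar j).ne'
    rwa [this, mul_zero] at hpoin

theorem exists_pos_le_dissipation (hk : 0 < k) (hh : h ≠ 0)
    (hpoin : ∀ U : ZMod N → ℝ, ∑ j, ((U j - U (j + 1)) / h - (Ustar j - Ustar (j + 1)) / h) ^ 2
      ≤ ϱ * ∑ j, bregman G Ustar U j)
    (hMstar : ∀ i, 0 < Mstar i) (hG : Differentiable ℝ G)
    (hGconv : ∀ i, ConvexOn ℝ univ fun W => G W i) (C : ℝ) {ε : ℝ} (hε : 0 < ε) :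
    ∃ c > 0, ∀ M U : ZMod N → ℝ, (∀ i, 0 < M i) → ∑ i, M i = ∑ i, Mstar i →
      ∑ j, U j = ∑ j, Ustar j → ε ≤ lyapunov Mstar Ustar M U → lyapunov Mstar Ustar M U ≤ C →
        c ≤ dissipation k G Mstar Ustar M U := by
  obtain ⟨K, hK, hKsub, hKmem⟩ := exists_isCompact_lyapunov_sublevel (Ustar := Ustar) hMstar C
  have hKpos : K ⊆ {p | ∀ i, 0 < p.1 i} := fun p hp => (hKsub hp).1
  have hS : IsCompact (K ∩ (fun p => lyapunov Mstar Ustar p.1 p.2) ⁻¹' Ici ε) :=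
    hK.of_isClosed_subset ((continuousOn_lyapunov.mono hKpos).preimage_isClosed_of_isClosed
      hK.isClosed isClosed_Ici) inter_subset_left
  obtain ⟨c, hc, hcW⟩ := hS.exists_forall_le'
    ((continuousOn_dissipation hG.continuous).mono (inter_subset_left.trans hKpos))
    fun p ⟨hpK, hpε⟩ => by
      refine (dissipation_nonneg hk hMstar (hKsub hpK).1 (hG Ustar) hGconv).lt_of_ne' fun h0 => ?_
      obtain ⟨hM, hU⟩ := eq_of_dissipation_eq_zero hk hh (hpoin p.2) hMstar (hKsub hpK).1
        (hG Ustar) hGconv (hKsub hpK).2 h0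
      have := (lyapunov_eq_zero_iff hMstar (hKsub hpK).1).2 ⟨hM, hU⟩
      exact hε.not_ge (this ▸ hpε)
  exact ⟨c, hc, fun M U hM hmass hmean hε hC => hcW (M, U) ⟨hKmem M U hM hmass hmean hC, hε⟩⟩

end Flow

theorem discrete_HRF_convergence_general
    (N : ℕ) [NeZero N] (k h : ℝ) (hk : 0 < k) (hh : 0 < h)
    (G : (ZMod N → ℝ) → (ZMod N → ℝ))
    (hGdiff : Differentiable ℝ G)
    (hGconv : ∀ j : ZMod N, ConvexOn ℝ Set.univ (fun U => G U j))
    (hpoin : ∃ ϱ : ℝ, 0 < ϱ ∧ ∀ U V : ZMod N → ℝ,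
      ∑ j : ZMod N, ((U j - U (j + 1)) / h - (V j - V (j + 1)) / h) ^ 2
        ≤ ϱ * ∑ j : ZMod N,
            (G U j - G V j - fderiv ℝ (fun W => G W j) V (U - V)))
    (hGtrans : ∀ (U : ZMod N → ℝ) (s : ℝ) (j : ZMod N), G (U + fun _ => s) j = G U j)
    (Mstar Ustar : ZMod N → ℝ)
    (hMstarpos : ∀ j, 0 < Mstar j)
    (hstarmass : (1 / (N : ℝ)) * ∑ j, Mstar j = 1)
    (hstar1 : ∀ i, Ftilde1 k G Mstar Ustar i = 0)
    (hstar2 : ∀ j, Ftilde2 G Mstar Ustar j = 0)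
    (M U : ℝ → ZMod N → ℝ)
    (hflow : ∀ t, 0 ≤ t → ∀ j,
      HasDerivAt (fun s => M s j) (-(Fbar1 k G (M t) (U t) j)) t ∧
      HasDerivAt (fun s => U s j) (-(Ftilde2 G (M t) (U t) j)) t)
    (hMpos : ∀ t, 0 ≤ t → ∀ j, 0 < M t j)
    (hmass0 : (1 / (N : ℝ)) * ∑ j, M 0 j = 1)
    (humean0 : ∑ j, U 0 j = ∑ j, Ustar j) :
    ∀ j : ZMod N,
      Tendsto (fun t => U t j) atTop (nhds (Ustar j)) ∧
      Tendsto (fun t => M t j) atTop (nhds (Mstar j)) := by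
  obtain ⟨ϱ, -, hpoin⟩ := hpoin
  replace hpoin : ∀ U, _ ≤ ϱ * ∑ j, bregman G Ustar U j := fun U => by
    simpa only [bregman_eq (hGdiff Ustar)] using hpoin U Ustar
  have hmass : ∀ t, 0 ≤ t → ∑ i, M t i = ∑ i, Mstar i := fun t ht => by
    rw [IsDiscreteHRFlow.sum_mass_eq hflow hMpos ht]
    exact mul_left_cancel₀ (one_div_ne_zero (Nat.cast_ne_zero.2 (NeZero.ne N)))
      (hmass0.trans hstarmass.symm)
  have hmean : ∀ t, 0 ≤ t → ∑ j, U t j = ∑ j, Ustar j := fun t ht =>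
    (IsDiscreteHRFlow.sum_mean_eq hflow hGdiff hGtrans ht).trans humean0
  have hV : Tendsto (fun t => lyapunov Mstar Ustar (M t) (U t)) atTop (𝓝 0) :=
    tendsto_zero_of_hasDerivAt_le_neg
      (fun t ht => IsDiscreteHRFlow.hasDerivAt_lyapunov hflow ht (hMpos t ht) (hmass t ht)
        hstar1 hstar2)
      (fun t ht => sub_le_self _ (sum_mul_bregman_nonneg (hGdiff _) hGconv
        fun i => (hMpos t ht i).le))
      (fun t ht => lyapunov_nonneg hMstarpos (hMpos t ht))
      (fun t ht => dissipation_nonneg hk hMstarpos (hMpos t ht) (hGdiff Ustar) hGconv)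
      fun ε hε => (exists_pos_le_dissipation hk hh.ne' hpoin hMstarpos hGdiff hGconv _ hε).imp
        fun c ⟨hc, hcW⟩ => ⟨hc, fun t ht => hcW _ _ (hMpos t ht) (hmass t ht) (hmean t ht)⟩
  obtain ⟨hM, hU⟩ := tendsto_of_tendsto_lyapunov_zero hMstarpos
    (eventually_atTop.2 ⟨0, fun t ht => ⟨hMpos t ht, hmass t ht, hmean t ht⟩⟩) hV
  exact fun j => ⟨tendsto_pi_nhds.1 hU j, tendsto_pi_nhds.1 hM j⟩

/-- convergence of the discrete Hessian Riemannian flow: under convexity,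
local Lipschitz continuity of the partial derivatives, the numerical Poincaré inequality and
translation invariance of `G`, a positive mass-one solution of the flow converges, as
`t → ∞`, to the positive mass-one solution `(M*,U*)` of `F̃ = 0` (with matching mean of `U`). -/
theorem discrete_HRF_convergence
    (N : ℕ) [NeZero N] (k h : ℝ) (hk : 0 < k) (hh : 0 < h)
    (G : (ZMod N → ℝ) → (ZMod N → ℝ))
    (hGdiff : Differentiable ℝ G)
    (hGconv : ∀ j : ZMod N, ConvexOn ℝ Set.univ (fun U => G U j))
    (hGlip : ∀ i j : ZMod N,
      LocallyLipschitz (fun U => (fderiv ℝ G U) (Pi.single j 1) i))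
    (hpoin : ∃ ϱ : ℝ, 0 < ϱ ∧ ∀ U V : ZMod N → ℝ,
      ∑ j : ZMod N, ((U j - U (j + 1)) / h - (V j - V (j + 1)) / h) ^ 2
        ≤ ϱ * ∑ j : ZMod N,
            (G U j - G V j - fderiv ℝ (fun W => G W j) V (U - V)))
    (hGtrans : ∀ (U : ZMod N → ℝ) (s : ℝ) (j : ZMod N), G (U + fun _ => s) j = G U j)
    (Mstar Ustar : ZMod N → ℝ)
    (hMstarpos : ∀ j, 0 < Mstar j)
    (hstarmass : (1 / (N : ℝ)) * ∑ j, Mstar j = 1)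
    (hstar1 : ∀ i, Ftilde1 k G Mstar Ustar i = 0)
    (hstar2 : ∀ j, Ftilde2 G Mstar Ustar j = 0)
    (M U : ℝ → ZMod N → ℝ)
    (hflow : ∀ t, 0 ≤ t → ∀ j,
      HasDerivAt (fun s => M s j) (-(Fbar1 k G (M t) (U t) j)) t ∧
      HasDerivAt (fun s => U s j) (-(Ftilde2 G (M t) (U t) j)) t)
    (hMpos : ∀ t, 0 ≤ t → ∀ j, 0 < M t j)
    (hmass0 : (1 / (N : ℝ)) * ∑ j, M 0 j = 1)
    (humean0 : ∑ j, U 0 j = ∑ j, Ustar j) :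
    ∀ j : ZMod N,
      Tendsto (fun t => U t j) atTop (nhds (Ustar j)) ∧
      Tendsto (fun t => M t j) atTop (nhds (Mstar j)) :=
  discrete_HRF_convergence_general N k h hk hh G hGdiff hGconv hpoin hGtrans Mstar Ustar hMstarpos
    hstarmass hstar1 hstar2 M U hflow hMpos hmass0 humean0
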